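/- Let $a, b \geq 1$ be integers and let $m = a + b$. For $n \geq 0$, let $E_n$ be the number of tuples $(x_1, \dots, x_m)$ of nonnegative integers with $x_1 + \dots + x_m = n$ and $x_{a+1} + \dots + x_{a+b}$ even, and let $T_n = \binom{n+m-1}{m-1}$ be the total number of such tuples without the parity condition. Then $E_n / T_n \to 1/2$ as $n \to \infty$. -/

import Mathlib

open Finset

lemma card_adt_succ (k n : ℕ) :
    (Finset.Nat.antidiagonalTuple (k+1) n).card
      = ∑ j ∈ range (n+1), (Finset.Nat.antidiagonalTuple k (n - j)).card := by
  rw [card_eq_sum_card_fiberwise (f := fun x => x 0) (t := range (n+1))]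
  · refine Finset.sum_congr rfl fun j hj => ?_
    rw [mem_range] at hj
    apply Finset.card_nbij' (i := fun x => Fin.tail x) (j := fun y => Fin.cons j y)
    · intro x hx
      simp only [Finset.mem_coe, mem_filter, Finset.Nat.mem_antidiagonalTuple] at hx ⊢
      obtain ⟨hs, h0⟩ := hx
      rw [Fin.sum_univ_succ] at hs
      simp only [Fin.tail]
      omega
    · intro y hy
      simp only [Finset.mem_coe, mem_filter, Finset.Nat.mem_antidiagonalTuple] at hy ⊢
      constructor
      · rw [Fin.sum_cons, hy]; omega
      · simp
    · intro x hx
      simp only [Finset.mem_coe, mem_filter] at hx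
      rw [← hx.2]
      exact Fin.cons_self_tail x
    · intro y hy
      exact Fin.tail_cons _ _
  · intro x hx
    rw [Finset.mem_coe, Finset.Nat.mem_antidiagonalTuple] at hx
    simp only [Finset.mem_coe, mem_range]
    have : x 0 ≤ n := hx ▸ Finset.single_le_sum (fun i _ => Nat.zero_le _) (mem_univ 0)
    omega

lemma card_adt : ∀ k n : ℕ, (Finset.Nat.antidiagonalTuple (k+1) n).card = (n + k).choose k := by
  intro k
  induction k with
  | zero => intro n; simp
  | succ k ih =>
    intro n
    rw [card_adt_succ]
    have : ∀ j ∈ range (n+1), (Finset.Nat.antidiagonalTuple (k+1) (n - j)).card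
        = ((n - j) + k).choose k := fun j _ => ih (n - j)
    rw [Finset.sum_congr rfl this]
    calc ∑ x ∈ range (n+1), (n - x + k).choose k
        = ∑ x ∈ range (n+1), (x + k).choose k := by
          rw [← Finset.sum_range_reflect (fun i => (i + k).choose k) (n+1)]
          exact Finset.sum_congr rfl fun x hx => by rw [mem_range] at hx; congr 1 <;> omega
      _ = (n + (k+1)).choose (k+1) := by rw [Nat.sum_range_add_choose n k]; congr 1 <;> omega

section Main
variable (a b n : ℕ)

lemma key_count (ha : 1 ≤ a) (hb : 1 ≤ b) :
    ∃ p q : ℕ, p ≤ (n + (a+b-2)).choose (a+b-2) ∧ q ≤ (n + (a+b-2)).choose (a+b-2) ∧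
      2 * (((Finset.Nat.antidiagonalTuple (a + b) n).filter
        (fun x => Even (∑ i : Fin (a + b), if a ≤ (i : ℕ) then x i else 0))).card) + q
      = (n + (a+b-1)).choose (a+b-1) + p := by
  classical
  set m := a + b with hm
  have hm2 : 2 ≤ m := by omega
  set i0 : Fin m := ⟨0, by omega⟩ with hi0
  set i1 : Fin m := ⟨a, by omega⟩ with hi1
  have hne : i1 ≠ i0 := by simp [hi0, hi1, Fin.ext_iff]; omega
  set g : (Fin m → ℕ) → ℕ := fun x => ∑ i : Fin m, if a ≤ (i : ℕ) then x i else 0 with hg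
  set P : (Fin m → ℕ) → Prop := fun x => Even (g x) with hP
  set S : (Fin m → ℕ) → Prop := fun x => Odd (x i1) ∨ 1 ≤ x i0 with hS
  set AntiD := Finset.Nat.antidiagonalTuple m n with hAD
  -- sum over filter form of g
  have hgfilt : ∀ x, g x = ∑ i ∈ univ.filter (fun i : Fin m => a ≤ (i : ℕ)), x i := by
    intro x; rw [hg]; simp [Finset.sum_filter]
  have hi1mem : i1 ∈ univ.filter (fun i : Fin m => a ≤ (i : ℕ)) := by simp [hi1]
  have hi0mem : i0 ∉ univ.filter (fun i : Fin m => a ≤ (i : ℕ)) := by simp [hi0]; omega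
  -- g after updating coordinate i1 and then i0
  have hgupd : ∀ (x : Fin m → ℕ) (v w : ℕ),
      g (Function.update (Function.update x i1 v) i0 w)
        = v + ∑ i ∈ (univ.filter (fun i : Fin m => a ≤ (i : ℕ))) \ {i1}, x i := by
    intro x v w
    rw [hgfilt, Finset.sum_update_of_notMem hi0mem, Finset.sum_update_of_mem hi1mem]
  have hgsplit : ∀ x : Fin m → ℕ,
      g x = x i1 + ∑ i ∈ (univ.filter (fun i : Fin m => a ≤ (i : ℕ))) \ {i1}, x i := by
    intro x
    rw [hgfilt, ← Finset.sum_eq_add_sum_sdiff_singleton_of_mem hi1mem]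
  set f : (Fin m → ℕ) → (Fin m → ℕ) := fun x =>
    if Odd (x i1) then Function.update (Function.update x i1 (x i1 - 1)) i0 (x i0 + 1)
    else Function.update (Function.update x i1 (x i1 + 1)) i0 (x i0 - 1) with hf
  -- sums preserved by f on S
  have hsum_upd : ∀ (x : Fin m → ℕ) (v w : ℕ),
      ∑ i, (Function.update (Function.update x i1 v) i0 w) i
        = v + w + ∑ i ∈ (univ \ {i1}) \ {i0}, x i := by
    intro x v w
    rw [Finset.sum_update_of_mem (Finset.mem_univ i0),
      Finset.sum_update_of_mem (by simp [hne] : i1 ∈ univ \ {i0})]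
    have hsets : (univ \ {i0}) \ {i1} = (univ \ {i1}) \ {i0} := by
      ext i; simp; tauto
    rw [hsets]; ring
  have hsum_x : ∀ x : Fin m → ℕ,
      ∑ i, x i = x i1 + x i0 + ∑ i ∈ (univ \ {i1}) \ {i0}, x i := by
    intro x
    have := hsum_upd x (x i1) (x i0)
    rwa [Function.update_eq_self, Function.update_eq_self] at this
  have hfdef : ∀ y : Fin m → ℕ, f y =
      if Odd (y i1) then Function.update (Function.update y i1 (y i1 - 1)) i0 (y i0 + 1)
      else Function.update (Function.update y i1 (y i1 + 1)) i0 (y i0 - 1) := fun y => rfl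
  have hev : ∀ (x : Fin m → ℕ) (v w : ℕ),
      (Function.update (Function.update x i1 v) i0 w) i1 = v ∧
      (Function.update (Function.update x i1 v) i0 w) i0 = w ∧
      ∀ j, j ≠ i0 → j ≠ i1 → (Function.update (Function.update x i1 v) i0 w) j = x j := by
    intro x v w
    refine ⟨?_, ?_, ?_⟩
    · rw [Function.update_of_ne hne, Function.update_self]
    · rw [Function.update_self]
    · intro j hj0 hj1
      rw [Function.update_of_ne hj0, Function.update_of_ne hj1]
  have hkey : ∀ x : Fin m → ℕ, S x → S (f x) ∧ (∑ i, f x i = ∑ i, x i) ∧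
      (Even (g (f x)) ↔ ¬ Even (g x)) ∧ f (f x) = x := by
    intro x hx
    by_cases hodd : Odd (x i1)
    · have hx1 : 1 ≤ x i1 := by have := Nat.odd_iff.mp hodd; omega
      have hfx : f x = Function.update (Function.update x i1 (x i1 - 1)) i0 (x i0 + 1) := by
        rw [hfdef, if_pos hodd]
      obtain ⟨e1, e0, erest⟩ := hev x (x i1 - 1) (x i0 + 1)
      rw [← hfx] at e1 e0 erest
      have hnodd : ¬ Odd (f x i1) := by
        rw [e1, Nat.odd_iff] at *; omega
      refine ⟨Or.inr (by rw [e0]; omega), ?_, ?_, ?_⟩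
      · rw [hfx, hsum_upd, hsum_x x]; omega
      · rw [hfx, hgupd, hgsplit x, Nat.even_iff, Nat.even_iff]
        rw [Nat.odd_iff] at hodd
        omega
      · rw [hfdef (f x), if_neg hnodd]
        funext j
        obtain ⟨e1', e0', erest'⟩ := hev (f x) (f x i1 + 1) (f x i0 - 1)
        rcases eq_or_ne j i0 with rfl | hj0
        · rw [e0', e0]; omega
        · rcases eq_or_ne j i1 with rfl | hj1
          · rw [e1', e1]; omega
          · rw [erest' j hj0 hj1, erest j hj0 hj1]
    · have hx0 : 1 ≤ x i0 := by
        rcases hx with h | h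
        · exact absurd h hodd
        · exact h
      have hfx : f x = Function.update (Function.update x i1 (x i1 + 1)) i0 (x i0 - 1) := by
        rw [hfdef, if_neg hodd]
      obtain ⟨e1, e0, erest⟩ := hev x (x i1 + 1) (x i0 - 1)
      rw [← hfx] at e1 e0 erest
      have hnodd : Odd (f x i1) := by
        rw [Nat.odd_iff] at *; rw [e1]; omega
      refine ⟨Or.inl hnodd, ?_, ?_, ?_⟩
      · rw [hfx, hsum_upd, hsum_x x]; omega
      · rw [hfx, hgupd, hgsplit x, Nat.even_iff, Nat.even_iff]
        rw [Nat.odd_iff] at hodd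
        omega
      · rw [hfdef (f x), if_pos hnodd]
        funext j
        obtain ⟨e1', e0', erest'⟩ := hev (f x) (f x i1 - 1) (f x i0 + 1)
        rcases eq_or_ne j i0 with rfl | hj0
        · rw [e0', e0]; omega
        · rcases eq_or_ne j i1 with rfl | hj1
          · rw [e1', e1]; omega
          · rw [erest' j hj0 hj1, erest j hj0 hj1]
  -- the bijection between even-S and odd-S parts
  have hmapsto : ∀ x ∈ AntiD.filter (fun x => P x ∧ S x),
      f x ∈ AntiD.filter (fun x => ¬ P x ∧ S x) := by
    intro x hx
    rw [mem_filter, Finset.Nat.mem_antidiagonalTuple] at hx ⊢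
    obtain ⟨hxA, hxP, hxS⟩ := hx
    obtain ⟨hS', hsum', hpar', _⟩ := hkey x hxS
    exact ⟨by rw [hsum', hxA], fun h => hpar'.mp h hxP, hS'⟩
  have hmapsfrom : ∀ x ∈ AntiD.filter (fun x => ¬ P x ∧ S x),
      f x ∈ AntiD.filter (fun x => P x ∧ S x) := by
    intro x hx
    rw [mem_filter, Finset.Nat.mem_antidiagonalTuple] at hx ⊢
    obtain ⟨hxA, hxP, hxS⟩ := hx
    obtain ⟨hS', hsum', hpar', _⟩ := hkey x hxS
    exact ⟨by rw [hsum', hxA], hpar'.mpr hxP, hS'⟩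
  have hbij : (AntiD.filter (fun x => P x ∧ S x)).card
      = (AntiD.filter (fun x => ¬ P x ∧ S x)).card := by
    refine Finset.card_bij' (fun x _ => f x) (fun x _ => f x) hmapsto hmapsfrom ?_ ?_
    · intro x hx
      rw [mem_filter] at hx
      exact (hkey x hx.2.2).2.2.2
    · intro x hx
      rw [mem_filter] at hx
      exact (hkey x hx.2.2).2.2.2
  -- bound on the non-S part
  set d := m - 2 with hd
  have hbound : (AntiD.filter (fun x => ¬ S x)).card ≤ (n + d).choose d := by
    rw [← card_adt d n]
    set emb : Fin (d+1) → Fin m := fun j => ⟨(j : ℕ) + 1, by omega⟩ with hemb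
    apply Finset.card_le_card_of_injOn (fun x => x ∘ emb)
    · intro x hx
      rw [Finset.mem_coe, mem_filter, Finset.Nat.mem_antidiagonalTuple] at hx
      obtain ⟨hxA, hnS⟩ := hx
      have hx00 : x i0 = 0 := by
        by_contra hc
        exact hnS (Or.inr (by omega))
      simp only [Finset.mem_coe, Finset.Nat.mem_antidiagonalTuple]
      have : ∑ j : Fin (d+1), (x ∘ emb) j = ∑ i ∈ univ \ {i0}, x i := by
        apply Finset.sum_nbij' (i := fun j => emb j)
          (j := fun i => (⟨(i : ℕ) - 1, by omega⟩ : Fin (d+1)))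
        · intro j _
          simp only [Finset.mem_coe, mem_sdiff, mem_univ, true_and, Finset.mem_singleton]
          exact fun h => Nat.succ_ne_zero _ (congrArg Fin.val h)
        · intro i _; exact Finset.mem_univ _
        · intro j _
          simp [hemb, Fin.ext_iff]
        · intro i hi
          simp only [mem_sdiff, mem_univ, true_and, Finset.mem_singleton] at hi
          simp only [hemb, hi0, Fin.ext_iff] at hi ⊢
          omega
        · intro j _; rfl
      rw [this]
      have := hsum_x x
      have h2 : ∑ i ∈ univ \ {i0}, x i = x i0 + ∑ i ∈ univ \ {i0}, x i - x i0 := by omega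
      have h3 : ∑ i, x i = x i0 + ∑ i ∈ univ \ {i0}, x i := by
        rw [← Finset.sum_eq_add_sum_sdiff_singleton_of_mem (Finset.mem_univ i0)]
      omega
    · intro x hx y hy hxy
      rw [Finset.coe_filter, Set.mem_setOf_eq] at hx hy
      have hx00 : x i0 = 0 := by
        by_contra hc; exact hx.2 (Or.inr (by omega))
      have hy00 : y i0 = 0 := by
        by_contra hc; exact hy.2 (Or.inr (by omega))
      funext i
      rcases eq_or_ne i i0 with rfl | hi
      · omega
      · have hipos : 1 ≤ (i : ℕ) := by
          rcases Nat.eq_zero_or_pos (i : ℕ) with h | h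
          · exact absurd (by rw [hi0]; simp [Fin.ext_iff]; omega) hi
          · exact h
        have : i = emb ⟨(i : ℕ) - 1, by omega⟩ := by
          rw [hemb]; simp [Fin.ext_iff]; omega
        rw [this]
        exact congrFun hxy _
  -- assemble
  have hEP : (AntiD.filter (fun x => Even (∑ i : Fin m, if a ≤ (i : ℕ) then x i else 0)))
      = AntiD.filter P := Finset.filter_congr (fun x _ => Iff.rfl)
  have hTcard : AntiD.card = (n + (a+b-1)).choose (a+b-1) := by
    have h := card_adt (m-1) n
    rw [show m - 1 + 1 = m from by omega] at h
    exact h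
  have hA := Finset.card_filter_add_card_filter_not (s := AntiD) (p := P)
  have hB := Finset.card_filter_add_card_filter_not (s := AntiD.filter P) (p := S)
  have hC := Finset.card_filter_add_card_filter_not
    (s := AntiD.filter (fun x => ¬ P x)) (p := S)
  rw [Finset.filter_filter, Finset.filter_filter] at hB hC
  refine ⟨(AntiD.filter (fun x => P x ∧ ¬ S x)).card,
    (AntiD.filter (fun x => ¬ P x ∧ ¬ S x)).card, ?_, ?_, ?_⟩
  · refine le_trans (Finset.card_le_card ?_) hbound
    intro x hx; rw [mem_filter] at hx ⊢; exact ⟨hx.1, hx.2.2⟩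
  · refine le_trans (Finset.card_le_card ?_) hbound
    intro x hx; rw [mem_filter] at hx ⊢; exact ⟨hx.1, hx.2.2⟩
  · rw [hEP, ← hTcard]
    omega

end Main

/-- with `m = a + b` bins, `E n` counts tuples of nonnegative integers
summing to `n` whose total in the last `b` coordinates is even, `T n` counts all such
tuples; then `E n / T n → 1/2`. -/
theorem stmt_1 (a b : ℕ) (ha : 1 ≤ a) (hb : 1 ≤ b)
    (E T : ℕ → ℕ)
    (hE : ∀ n, E n = ((Finset.Nat.antidiagonalTuple (a + b) n).filter
      (fun x => Even (∑ i : Fin (a + b), if a ≤ (i : ℕ) then x i else 0))).card)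
    (hT : ∀ n, T n = (n + (a + b) - 1).choose (a + b - 1)) :
    Filter.Tendsto (fun n => (E n : ℝ) / (T n : ℝ)) Filter.atTop (nhds (1 / 2)) := by
  obtain ⟨e, he⟩ : ∃ e, a + b = e + 2 := ⟨a + b - 2, by omega⟩
  have hT' : ∀ n, T n = (n + e + 1).choose (e + 1) := by
    intro n; rw [hT]; congr 1 <;> omega
  have hkey : ∀ n, ∃ p q : ℕ, p ≤ (n + e).choose e ∧ q ≤ (n + e).choose e ∧
      2 * E n + q = T n + p := by
    intro n
    obtain ⟨p, q, h1, h2, h3⟩ := key_count a b n ha hb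
    have he2 : a + b - 2 = e := by clear h1 h2 h3; omega
    rw [he2] at h1 h2
    rw [← hE n] at h3
    rw [show a + b - 1 = e + 1 from by omega,
      show n + (e + 1) = n + e + 1 from by omega, ← hT' n] at h3
    exact ⟨p, q, h1, h2, h3⟩
  have hbound : ∀ n : ℕ, |(E n : ℝ) / T n - 1 / 2| ≤ ((e : ℝ) + 1) / (2 * ((n : ℝ) + e + 1)) := by
    intro n
    obtain ⟨p, q, hp, hq, hpq⟩ := hkey n
    have hTpos : 0 < T n := by rw [hT' n]; exact Nat.choose_pos (by omega)
    have hTR : (n + e + 1) * (n + e).choose e = T n * (e + 1) := by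
      rw [hT' n]
      exact Nat.add_one_mul_choose_eq (n + e) e
    have ht : (0 : ℝ) < (T n : ℝ) := by exact_mod_cast hTpos
    have hpq' : 2 * (E n : ℝ) + q = (T n : ℝ) + p := by exact_mod_cast hpq
    have hp' : (p : ℝ) ≤ ((n + e).choose e : ℝ) := by exact_mod_cast hp
    have hq' : (q : ℝ) ≤ ((n + e).choose e : ℝ) := by exact_mod_cast hq
    have hTR' : ((n : ℝ) + e + 1) * ((n + e).choose e : ℝ) = (T n : ℝ) * ((e : ℝ) + 1) := by
      exact_mod_cast hTR
    have heq : (E n : ℝ) / T n - 1 / 2 = ((p : ℝ) - q) / (2 * T n) := by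
      field_simp
      ring_nf
      nlinarith [hpq']
    rw [heq, abs_div, abs_of_pos (by positivity : (0 : ℝ) < 2 * T n)]
    calc |(p : ℝ) - q| / (2 * T n)
        ≤ ((n + e).choose e : ℝ) / (2 * T n) := by
          gcongr
          rw [abs_le]
          have hp0 : (0 : ℝ) ≤ (p : ℝ) := Nat.cast_nonneg p
          have hq0 : (0 : ℝ) ≤ (q : ℝ) := Nat.cast_nonneg q
          constructor <;> linarith
      _ = ((e : ℝ) + 1) / (2 * ((n : ℝ) + e + 1)) := by
          rw [div_eq_div_iff (by positivity) (by positivity)]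
          linear_combination 2 * hTR'
  have h0 : Filter.Tendsto (fun n : ℕ => ((e : ℝ) + 1) / (2 * ((n : ℝ) + e + 1)))
      Filter.atTop (nhds 0) := by
    have hat : Filter.Tendsto (fun n : ℕ => (n : ℝ) + ((e : ℝ) + 1)) Filter.atTop
        Filter.atTop := Filter.tendsto_atTop_add_const_right _ _ tendsto_natCast_atTop_atTop
    have h1 : Filter.Tendsto (fun n : ℕ => (1 : ℝ) / ((n : ℝ) + ((e : ℝ) + 1)))
        Filter.atTop (nhds 0) :=
      hat.inv_tendsto_atTop.congr fun n => (one_div _).symm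
    have h2 := h1.const_mul (((e : ℝ) + 1) / 2)
    rw [mul_zero] at h2
    refine h2.congr fun n => ?_
    have : (n : ℝ) + ((e : ℝ) + 1) > 0 := by positivity
    field_simp
    try ring
    try simp
  have hmain : Filter.Tendsto (fun n : ℕ => (E n : ℝ) / T n - 1 / 2)
      Filter.atTop (nhds 0) :=
    squeeze_zero_norm (fun n => by simpa using hbound n) h0
  have := hmain.add (tendsto_const_nhds (x := (1 : ℝ) / 2))
  rw [zero_add] at this
  refine this.congr fun n => by ring
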